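/- Under the assumptions on J above and with μ additionally satisfying (μ(s₁)−μ(s₂))(s₁−s₂) ≥ −d_μ|s₁−s₂|² for all s₁,s₂ ≥ 0, the Clarke subdifferential ∂J is relaxed monotone: for all v₁,v₂ ∈ L²(Γ;ℝ^d) and η_i ∈ ∂J(v_i), i=1,2, one has ⟨η₁−η₂, v₁−v₂⟩_{L²(Γ;ℝ^d)} ≥ −F̄ d_μ ‖v₁−v₂‖²_{L²(Γ;ℝ^d)}. -/

import Mathlib

open MeasureTheory

/-- The Clarke generalized directional derivative
`φ⁰(x;v) = limsup_{y→x, t↓0} (φ(y+tv) − φ(y))/t`, written as an inf over `ε > 0` of sups. -/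
noncomputable def clarkeDeriv {X : Type*} [NormedAddCommGroup X] [NormedSpace ℝ X]
    (φ : X → ℝ) (x v : X) : ℝ :=
  sInf { c : ℝ | ∃ ε : ℝ, 0 < ε ∧
    c = sSup { q : ℝ | ∃ (y : X) (t : ℝ), ‖y - x‖ < ε ∧ 0 < t ∧ t < ε ∧
          q = (φ (y + t • v) - φ y) / t } }

/-- The Clarke generalized gradient `∂φ(x) = {ζ ∈ X' | φ⁰(x;v) ≥ ⟨ζ,v⟩ ∀ v}`. -/
def clarkeSubdiff {X : Type*} [NormedAddCommGroup X] [NormedSpace ℝ X]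
    (φ : X → ℝ) (x : X) : Set (X →L[ℝ] ℝ) :=
  { ζ | ∀ v : X, ζ v ≤ clarkeDeriv φ x v }

open Set
open scoped ENNReal NNReal RealInnerProductSpace

/-! The one-sided condition on `μ` says exactly that `s ↦ μ(s) + d_μ s` is nondecreasing on
`[0, ∞)`, so its primitive `G(r) = ∫₀^r μ + d_μ r²/2` is convex and nondecreasing there and
`v ↦ ∫ F G(|v|)` is convex on `L²`. That functional is `J + q` for the quadratic form
`q(v) = (d_μ/2) ∫ F |v|²`. For a function that is convex up to a nonnegative quadratic form, the
chord inequality bounds all difference quotients near `x` and gives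
`J⁰(x; w) ≤ J(x + w) − J(x) + q(w)`; adding this at `(v₁, v₂ − v₁)` and `(v₂, v₁ − v₂)` yields
`⟨η₁ − η₂, v₁ − v₂⟩ ≥ −2 q(v₁ − v₂) ≥ −F̄ d_μ ‖v₁ − v₂‖²`. -/

section Clarke

variable {X : Type*} [NormedAddCommGroup X] [NormedSpace ℝ X]

theorem clarkeDeriv_le_of_continuousAt {φ g : X → ℝ} {x v : X} {c : ℝ} (hg : ContinuousAt g x)
    (hle : ∀ y t, 0 < t → t ≤ 1 → (φ (y + t • v) - φ y) / t ≤ g y)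
    (hbdd : ∀ t, 0 < t → t ≤ 1 → c ≤ (φ (x + t • v) - φ x) / t) :
    clarkeDeriv φ x v ≤ g x := by
  set S : ℝ → Set ℝ := fun ε => { q | ∃ (y : X) (t : ℝ), ‖y - x‖ < ε ∧ 0 < t ∧ t < ε ∧
    q = (φ (y + t • v) - φ y) / t }
  have hS : ∀ ε, 0 < ε → (φ (x + (min ε 1 / 2) • v) - φ x) / (min ε 1 / 2) ∈ S ε := fun ε hε =>
    ⟨x, min ε 1 / 2, by simpa using hε, by positivity,
      by linarith [min_le_left ε 1, lt_min hε one_pos], rfl⟩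
  -- an unbounded `S ε` has junk supremum `0`, hence the `min c 0`
  have hbelow : BddBelow { s | ∃ ε, 0 < ε ∧ s = sSup (S ε) } := by
    refine ⟨min c 0, ?_⟩
    rintro _ ⟨ε, hε, rfl⟩
    by_cases h : BddAbove (S ε)
    · exact (min_le_left _ _).trans ((hbdd _ (by positivity)
        (by linarith [min_le_right ε 1])).trans (le_csSup h (hS ε hε)))
    · rw [Real.sSup_of_not_bddAbove h]
      exact min_le_right _ _
  refine le_of_forall_pos_le_add fun δ hδ => ?_
  obtain ⟨ε, hε, hball⟩ := Metric.continuousAt_iff.1 hg δ hδ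
  have hε' : 0 < min ε 1 := lt_min hε one_pos
  have hsup : sSup (S (min ε 1)) ≤ g x + δ := by
    refine csSup_le ⟨_, hS _ hε'⟩ ?_
    rintro _ ⟨y, t, hy, ht, htε, rfl⟩
    have hgy := (abs_lt.1 (hball (by rw [dist_eq_norm]; exact hy.trans_le (min_le_left _ _)))).2
    linarith [hle y t ht (htε.le.trans (min_le_right _ _))]
  exact (csInf_le hbelow ⟨_, hε', rfl⟩).trans hsup

theorem clarkeDeriv_le_of_convexOn_add {J : X → ℝ} (b : X →L[ℝ] X →L[ℝ] ℝ)
    (hb : ∀ u v, b u v = b v u) (hpos : ∀ v, 0 ≤ b v v) (hJ : Continuous J)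
    (hconv : ConvexOn ℝ univ fun v => J v + b v v / 2) (x w : X) :
    clarkeDeriv J x w ≤ J (x + w) - J x + b w w / 2 := by
  set ψ := fun v => J v + b v v / 2
  have hexpand : ∀ y (t : ℝ), J (y + t • w) - J y
      = ψ (y + t • w) - ψ y - t * b y w - t ^ 2 * (b w w / 2) := by
    intro y t
    simp only [ψ, map_add, map_smul, add_apply, smul_apply, smul_eq_mul, hb w y]
    ring
  have hchord : ∀ y (t : ℝ), 0 ≤ t → t ≤ 1 → ψ (y + t • w) ≤ (1 - t) * ψ y + t * ψ (y + w) := by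
    intro y t ht₀ ht₁
    have h := hconv.2 (mem_univ y) (mem_univ (y + w)) (sub_nonneg.2 ht₁) ht₀ (by ring)
    rwa [show (1 - t) • y + t • (y + w) = y + t • w by module] at h
  have hslope : ∀ t : ℝ, 0 < t → ψ x - ψ (x - w) ≤ (ψ (x + t • w) - ψ x) / t := by
    intro t ht
    have h := hconv.2 (mem_univ (x - w)) (mem_univ (x + t • w)) (by positivity : 0 ≤ t / (1 + t))
      (by positivity : 0 ≤ 1 / (1 + t)) (by field_simp; ring)
    rw [show (t / (1 + t)) • (x - w) + (1 / (1 + t)) • (x + t • w) = x by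
      match_scalars <;> field_simp <;> ring] at h
    rw [le_div_iff₀ ht]
    simp only [smul_eq_mul] at h
    field_simp at h
    linarith
  have hg : ContinuousAt (fun y => ψ (y + w) - ψ y - b y w) x := by
    simp only [ψ]; fun_prop
  refine (clarkeDeriv_le_of_continuousAt (c := ψ x - ψ (x - w) - b x w - b w w / 2) hg
    (fun y t ht ht₁ => ?_) (fun t ht ht₁ => ?_)).trans_eq ?_
  · rw [div_le_iff₀ ht, hexpand]
    nlinarith [hchord y t ht.le ht₁, hpos w]
  · rw [le_div_iff₀ ht, hexpand]
    nlinarith [(le_div_iff₀ ht).1 (hslope t ht),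
      mul_nonneg (mul_nonneg ht.le (sub_nonneg.2 ht₁)) (hpos w)]
  · have h1 := hexpand x 1
    simp only [one_smul, one_mul, one_pow] at h1
    linarith

theorem relaxed_monotone_of_convexOn_add {J : X → ℝ} (b : X →L[ℝ] X →L[ℝ] ℝ)
    (hb : ∀ u v, b u v = b v u) (hpos : ∀ v, 0 ≤ b v v) (hJ : Continuous J)
    (hconv : ConvexOn ℝ univ fun v => J v + b v v / 2) {v₁ v₂ : X} {η₁ η₂ : X →L[ℝ] ℝ}
    (hη₁ : η₁ ∈ clarkeSubdiff J v₁) (hη₂ : η₂ ∈ clarkeSubdiff J v₂) :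
    -b (v₁ - v₂) (v₁ - v₂) ≤ (η₁ - η₂) (v₁ - v₂) := by
  have h₁ := (hη₁ (v₂ - v₁)).trans (clarkeDeriv_le_of_convexOn_add b hb hpos hJ hconv v₁ (v₂ - v₁))
  have h₂ := (hη₂ (v₁ - v₂)).trans (clarkeDeriv_le_of_convexOn_add b hb hpos hJ hconv v₂ (v₁ - v₂))
  rw [add_sub_cancel] at h₁ h₂
  rw [← neg_sub v₁ v₂] at h₁
  simp only [map_neg, neg_apply, neg_neg] at h₁
  rw [sub_apply]
  linarith

end Clarke

section Primitive

variable {g : ℝ → ℝ} {D : Set ℝ}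

theorem convexOn_primitive (hg : Continuous g) (hD : Convex ℝ D) (hmono : MonotoneOn g D)
    (a : ℝ) : ConvexOn ℝ D fun r => ∫ s in a..r, g s := by
  refine MonotoneOn.convexOn_of_deriv hD
    (intervalIntegral.differentiable_integral_of_continuous hg).continuous.continuousOn
    (intervalIntegral.differentiableOn_integral_of_continuous hg) ?_
  rw [show deriv (fun r => ∫ s in a..r, g s) = g from funext (Continuous.deriv_integral g hg a)]
  exact hmono.mono interior_subset

theorem monotoneOn_primitive (hg : Continuous g) (hD : Convex ℝ D) (hnonneg : ∀ s ∈ D, 0 ≤ g s)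
    (a : ℝ) : MonotoneOn (fun r => ∫ s in a..r, g s) D :=
  monotoneOn_of_deriv_nonneg hD
    (intervalIntegral.differentiable_integral_of_continuous hg).continuous.continuousOn
    (intervalIntegral.differentiableOn_integral_of_continuous hg)
    (fun r hr => by rw [Continuous.deriv_integral g hg]; exact hnonneg r (interior_subset hr))

theorem abs_primitive_sub_le {C : ℝ} (hg : Continuous g) (hC : ∀ s, 0 ≤ s → |g s| ≤ C)
    {r₁ r₂ : ℝ} (h₁ : 0 ≤ r₁) (h₂ : 0 ≤ r₂) :
    |(∫ s in (0 : ℝ)..r₁, g s) - ∫ s in (0 : ℝ)..r₂, g s| ≤ C * |r₁ - r₂| := by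
  rw [intervalIntegral.integral_interval_sub_left (hg.intervalIntegrable _ _)
    (hg.intervalIntegrable _ _)]
  exact intervalIntegral.norm_integral_le_of_norm_le_const fun s hs =>
    (Real.norm_eq_abs _).trans_le (hC s ((le_min h₂ h₁).trans hs.1.le))

end Primitive

theorem monotoneOn_add_mul_of_one_sided {μf : ℝ → ℝ} {dμ : ℝ}
    (hmono : ∀ s₁ s₂, 0 ≤ s₁ → 0 ≤ s₂ → (μf s₁ - μf s₂) * (s₁ - s₂) ≥ -dμ * |s₁ - s₂| ^ 2) :
    MonotoneOn (fun s => μf s + dμ * s) (Ici 0) := by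
  intro a ha b hb hab
  rcases hab.eq_or_lt with rfl | hlt
  · rfl
  have h := hmono b a hb ha
  rw [sq_abs] at h
  have hpos : 0 < b - a := sub_pos.2 hlt
  nlinarith

section Norm

variable {E : Type*} [NormedAddCommGroup E]

theorem ConvexOn.comp_norm [NormedSpace ℝ E] {G : ℝ → ℝ} (hconv : ConvexOn ℝ (Ici 0) G)
    (hmono : MonotoneOn G (Ici 0)) : ConvexOn ℝ univ fun e : E => G ‖e‖ := by
  refine ⟨convex_univ, fun e₁ _ e₂ _ a b ha hb hab => ?_⟩
  calc G ‖a • e₁ + b • e₂‖ ≤ G (a * ‖e₁‖ + b * ‖e₂‖) := by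
        refine hmono (norm_nonneg _) (by simp only [mem_Ici]; positivity) ?_
        simpa [norm_smul, abs_of_nonneg ha, abs_of_nonneg hb] using norm_add_le (a • e₁) (b • e₂)
    _ ≤ a • G ‖e₁‖ + b • G ‖e₂‖ := hconv.2 (norm_nonneg e₁) (norm_nonneg e₂) ha hb hab

theorem lipschitzWith_primitive_comp_norm {g : ℝ → ℝ} {C : ℝ} (hg : Continuous g)
    (hC : ∀ s, 0 ≤ s → |g s| ≤ C) :
    LipschitzWith C.toNNReal fun e : E => ∫ s in (0 : ℝ)..‖e‖, g s :=
  LipschitzWith.of_dist_le' fun e₁ e₂ =>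
    (abs_primitive_sub_le hg hC (norm_nonneg e₁) (norm_nonneg e₂)).trans
      (mul_le_mul_of_nonneg_left (by simpa [dist_eq_norm] using abs_norm_sub_norm_le e₁ e₂)
        ((abs_nonneg _).trans (hC 0 le_rfl)))

end Norm

section Lebesgue

variable {Γ E : Type*} [MeasurableSpace Γ] {γm : Measure Γ} [NormedAddCommGroup E]

theorem integral_norm_le_sqrt_measureReal_univ_mul_norm [IsFiniteMeasure γm] (u : Lp E 2 γm) :
    ∫ x, ‖u x‖ ∂γm ≤ √(γm.real univ) * ‖u‖ := by
  have h := eLpNorm_le_eLpNorm_mul_rpow_measure_univ (p := 1) (q := 2) (by norm_num)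
    (Lp.aestronglyMeasurable u)
  rw [integral_norm_eq_lintegral_enorm (Lp.aestronglyMeasurable u),
    ← eLpNorm_one_eq_lintegral_enorm, Lp.norm_def, mul_comm, Real.sqrt_eq_rpow, measureReal_def,
    ENNReal.toReal_rpow, ← ENNReal.toReal_mul]
  refine ENNReal.toReal_mono (by finiteness) (h.trans_eq ?_)
  norm_num

theorem integrable_norm_sq (u : Lp E 2 γm) : Integrable (fun x => ‖u x‖ ^ 2) γm := by
  simpa using (Lp.memLp u).integrable_norm_pow two_ne_zero

theorem integrable_mul_norm_sq {F : Γ → ℝ} (hF : MemLp F ∞ γm) (u : Lp E 2 γm) :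
    Integrable (fun x => F x * ‖u x‖ ^ 2) γm :=
  (integrable_norm_sq u).mul_of_top_right hF

theorem integral_norm_sq_eq_norm_sq [InnerProductSpace ℝ E] (u : Lp E 2 γm) :
    ∫ x, ‖u x‖ ^ 2 ∂γm = ‖u‖ ^ 2 := by
  simp only [← real_inner_self_eq_norm_sq, L2.inner_def]

theorem ConvexOn.integral_mul_comp [NormedSpace ℝ E] {p : ℝ≥0∞} {F : Γ → ℝ}
    {Φ : E → ℝ} (hΦ : ConvexOn ℝ univ Φ) (hF : 0 ≤ᵐ[γm] F)
    (hint : ∀ u : Lp E p γm, Integrable (fun x => F x * Φ (u x)) γm) :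
    ConvexOn ℝ univ fun u : Lp E p γm => ∫ x, F x * Φ (u x) ∂γm := by
  refine ⟨convex_univ, fun u _ v _ a b ha hb hab => ?_⟩
  simp only [smul_eq_mul]
  rw [← integral_const_mul, ← integral_const_mul,
    ← integral_add ((hint u).const_mul a) ((hint v).const_mul b)]
  refine integral_mono_ae (hint _) (((hint u).const_mul a).add ((hint v).const_mul b)) ?_
  filter_upwards [hF, Lp.coeFn_add (a • u) (b • v), Lp.coeFn_smul a u, Lp.coeFn_smul b v]
    with x hx hadd ha' hb'
  rw [hadd, Pi.add_apply, ha', hb']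
  have h := hΦ.2 (mem_univ (u x)) (mem_univ (v x)) ha hb hab
  simp only [Pi.smul_apply, smul_eq_mul] at h ⊢
  exact (mul_le_mul_of_nonneg_left h hx).trans_eq (by ring)

variable [IsFiniteMeasure γm] {Φ : E → ℝ} {L : ℝ≥0}

theorem integrable_comp_of_lipschitzWith (hΦ : LipschitzWith L Φ) (u : Lp E 2 γm) :
    Integrable (fun x => Φ (u x)) γm := by
  refine Integrable.mono' ((integrable_const ‖Φ 0‖).add
    (((Lp.memLp u).integrable one_le_two).norm.const_mul L))
    (hΦ.continuous.comp_aestronglyMeasurable (Lp.aestronglyMeasurable u)) (ae_of_all _ fun x => ?_)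
  have h := hΦ.dist_le_mul (u x) 0
  rw [dist_eq_norm, dist_zero_right] at h
  simp only [Pi.add_apply]
  linarith [norm_sub_norm_le (Φ (u x)) (Φ 0)]

theorem continuous_integral_mul_comp_of_lipschitzWith {F : Γ → ℝ} {C : ℝ}
    (hFm : AEStronglyMeasurable F γm) (hFC : ∀ᵐ x ∂γm, ‖F x‖ ≤ C) (hΦ : LipschitzWith L Φ) :
    Continuous fun u : Lp E 2 γm => ∫ x, F x * Φ (u x) ∂γm := by
  rcases eq_zero_or_neZero γm with rfl | _
  · simpa using continuous_const
  have hC : 0 ≤ C := by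
    obtain ⟨x, hx⟩ := hFC.exists
    exact (norm_nonneg _).trans hx
  have hint u := (integrable_comp_of_lipschitzWith hΦ u).bdd_mul hFm hFC
  refine (LipschitzWith.of_dist_le' (K := C * L * √(γm.real univ)) fun u v => ?_).continuous
  rw [dist_eq_norm, dist_eq_norm, ← integral_sub (hint u) (hint v)]
  calc ‖∫ x, (F x * Φ (u x) - F x * Φ (v x)) ∂γm‖
      ≤ ∫ x, C * L * ‖(u - v) x‖ ∂γm := by
        refine norm_integral_le_of_norm_le
          (((Lp.memLp (u - v)).integrable one_le_two).norm.const_mul _) ?_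
        filter_upwards [hFC, Lp.coeFn_sub u v] with x hx hsub
        rw [hsub, Pi.sub_apply, ← mul_sub, norm_mul, mul_assoc, ← dist_eq_norm, ← dist_eq_norm]
        exact mul_le_mul hx (hΦ.dist_le_mul _ _) dist_nonneg hC
    _ ≤ C * L * (√(γm.real univ) * ‖u - v‖) := by
        rw [integral_const_mul]
        gcongr
        exact integral_norm_le_sqrt_measureReal_univ_mul_norm (u - v)
    _ = C * L * √(γm.real univ) * ‖u - v‖ := by ring

end Lebesgue

section WeightedInner

variable {Γ E : Type*} [MeasurableSpace Γ] {γm : Measure Γ} [NormedAddCommGroup E]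
  [InnerProductSpace ℝ E] {F : Γ → ℝ}

noncomputable def weightedInner (hF : MemLp F ∞ γm) : Lp E 2 γm →L[ℝ] Lp E 2 γm →L[ℝ] ℝ :=
  (innerSL ℝ).bilinearComp (.id ℝ _) ((ContinuousLinearMap.lsmul ℝ ℝ).holderL γm ∞ 2 2 (hF.toLp F))

variable (hF : MemLp F ∞ γm)

theorem weightedInner_apply (u w : Lp E 2 γm) :
    weightedInner hF u w = ∫ x, F x * ⟪u x, w x⟫ ∂γm := by
  simp only [weightedInner, ContinuousLinearMap.bilinearComp_apply, ContinuousLinearMap.id_apply,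
    innerSL_apply_apply, ContinuousLinearMap.holderL_apply_apply, L2.inner_def]
  refine integral_congr_ae ?_
  filter_upwards [ContinuousLinearMap.coeFn_holder (r := 2) (ContinuousLinearMap.lsmul ℝ ℝ)
    (hF.toLp F) w, hF.coeFn_toLp] with x hholder hF'
  rw [hholder, ContinuousLinearMap.lsmul_apply, hF', real_inner_smul_right]

theorem weightedInner_comm (u w : Lp E 2 γm) : weightedInner hF u w = weightedInner hF w u := by
  simp only [weightedInner_apply, real_inner_comm]

theorem weightedInner_self (u : Lp E 2 γm) :
    weightedInner hF u u = ∫ x, F x * ‖u x‖ ^ 2 ∂γm := by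
  simp only [weightedInner_apply, real_inner_self_eq_norm_sq]

theorem weightedInner_self_nonneg (hF₀ : 0 ≤ᵐ[γm] F) (u : Lp E 2 γm) :
    0 ≤ weightedInner hF u u := by
  rw [weightedInner_self]
  exact integral_nonneg_of_ae (hF₀.mono fun x hx => mul_nonneg hx (sq_nonneg _))

theorem weightedInner_self_le {C : ℝ} (hFC : ∀ᵐ x ∂γm, F x ≤ C) (u : Lp E 2 γm) :
    weightedInner hF u u ≤ C * ‖u‖ ^ 2 := by
  rw [weightedInner_self, ← integral_norm_sq_eq_norm_sq, ← integral_const_mul]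
  exact integral_mono_ae (integrable_mul_norm_sq hF u) ((integrable_norm_sq u).const_mul C)
    (hFC.mono fun x hx => mul_le_mul_of_nonneg_right hx (sq_nonneg _))

end WeightedInner

section Friction

variable {μf : ℝ → ℝ} {dμ : ℝ}

theorem integral_add_const_mul_id (hμcont : Continuous μf) (r : ℝ) :
    ∫ s in (0 : ℝ)..r, (μf s + dμ * s) = (∫ s in (0 : ℝ)..r, μf s) + dμ / 2 * r ^ 2 := by
  rw [intervalIntegral.integral_add (hμcont.intervalIntegrable _ _)
    ((continuous_const_mul dμ).intervalIntegrable _ _),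
    intervalIntegral.integral_const_mul, integral_id]
  ring

variable {Γ E : Type*} [MeasurableSpace Γ] {γm : Measure Γ} [IsFiniteMeasure γm]
  [NormedAddCommGroup E] [InnerProductSpace ℝ E] {F : Γ → ℝ}

theorem convexOn_integral_primitive_add_weightedInner (hμcont : Continuous μf) (hdμ : 0 ≤ dμ)
    (hμ₀ : ∀ s, 0 ≤ s → 0 ≤ μf s)
    (hmono : ∀ s₁ s₂, 0 ≤ s₁ → 0 ≤ s₂ → (μf s₁ - μf s₂) * (s₁ - s₂) ≥ -dμ * |s₁ - s₂| ^ 2)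
    {L : ℝ≥0} (hlip : LipschitzWith L fun e : E => ∫ s in (0 : ℝ)..‖e‖, μf s)
    (hF₀ : 0 ≤ᵐ[γm] F) (hF : MemLp F ∞ γm) :
    ConvexOn ℝ univ fun v : Lp E 2 γm =>
      (∫ x, F x * (∫ s in (0 : ℝ)..‖v x‖, μf s) ∂γm) + (dμ • weightedInner hF) v v / 2 := by
  have hg : Continuous fun s => μf s + dμ * s := hμcont.add (continuous_const_mul dμ)
  have hΦ : ConvexOn ℝ univ fun e : E => ∫ s in (0 : ℝ)..‖e‖, (μf s + dμ * s) :=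
    (convexOn_primitive hg (convex_Ici 0) (monotoneOn_add_mul_of_one_sided hmono) 0).comp_norm
      (monotoneOn_primitive hg (convex_Ici 0)
        (fun s hs => add_nonneg (hμ₀ s hs) (mul_nonneg hdμ hs)) 0)
  have hint : ∀ u : Lp E 2 γm, Integrable (fun x => F x * (∫ s in (0 : ℝ)..‖u x‖, μf s)) γm :=
    fun u => (integrable_comp_of_lipschitzWith hlip u).mul_of_top_right hF
  have hpoint : ∀ r : ℝ, ∀ y, y * ∫ s in (0 : ℝ)..r, (μf s + dμ * s)
      = y * (∫ s in (0 : ℝ)..r, μf s) + dμ / 2 * (y * r ^ 2) := fun r y => by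
    rw [integral_add_const_mul_id hμcont]; ring
  have heq : (fun v : Lp E 2 γm =>
      (∫ x, F x * (∫ s in (0 : ℝ)..‖v x‖, μf s) ∂γm) + (dμ • weightedInner hF) v v / 2)
      = fun v => ∫ x, F x * (∫ s in (0 : ℝ)..‖v x‖, (μf s + dμ * s)) ∂γm := by
    ext v
    simp only [smul_apply, smul_eq_mul, weightedInner_self, hpoint]
    rw [integral_add (hint v) ((integrable_mul_norm_sq hF v).const_mul _), integral_const_mul]
    ring
  rw [heq]
  refine hΦ.integral_mul_comp hF₀ fun u => ?_
  exact ((hint u).add ((integrable_mul_norm_sq hF u).const_mul (dμ / 2))).congr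
    (ae_of_all _ fun x => (hpoint _ _).symm)

end Friction

/-- the Clarke subdifferential of the friction functional `J` is relaxed
monotone: `⟨η₁ − η₂, v₁ − v₂⟩ ≥ −F̄ d_μ ‖v₁ − v₂‖²` for all `ηᵢ ∈ ∂J(vᵢ)`. -/
theorem clarke_subdiff_relaxed_monotone
    {Γ : Type*} [MeasurableSpace Γ] (γm : Measure Γ) [IsFiniteMeasure γm]
    (d : ℕ) (F : Γ → ℝ) (Fbar : ℝ) (hFmeas : Measurable F)
    (hF : ∀ᵐ x ∂γm, 0 ≤ F x ∧ F x ≤ Fbar)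
    (μf : ℝ → ℝ) (μbar dμ : ℝ) (hμcont : Continuous μf) (hdμ : 0 < dμ)
    (hμ : ∀ s, 0 ≤ s → 0 ≤ μf s ∧ μf s ≤ μbar)
    (hmono : ∀ s₁ s₂, 0 ≤ s₁ → 0 ≤ s₂ →
      (μf s₁ - μf s₂) * (s₁ - s₂) ≥ -dμ * |s₁ - s₂| ^ 2)
    (J : Lp (EuclideanSpace ℝ (Fin d)) 2 γm → ℝ)
    (hJ : ∀ v : Lp (EuclideanSpace ℝ (Fin d)) 2 γm,
      J v = ∫ x, F x * (∫ s in (0:ℝ)..‖v x‖, μf s) ∂γm) :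
    ∀ (v₁ v₂ : Lp (EuclideanSpace ℝ (Fin d)) 2 γm)
      (η₁ η₂ : Lp (EuclideanSpace ℝ (Fin d)) 2 γm →L[ℝ] ℝ),
      η₁ ∈ clarkeSubdiff J v₁ → η₂ ∈ clarkeSubdiff J v₂ →
      (η₁ - η₂) (v₁ - v₂) ≥ -(Fbar * dμ) * ‖v₁ - v₂‖ ^ 2 := by
  intro v₁ v₂ η₁ η₂ hη₁ hη₂
  obtain rfl : J = fun v => ∫ x, F x * (∫ s in (0 : ℝ)..‖v x‖, μf s) ∂γm := funext hJ
  have hFC : ∀ᵐ x ∂γm, ‖F x‖ ≤ Fbar :=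
    hF.mono fun x hx => (Real.norm_of_nonneg hx.1).trans_le hx.2
  have hFtop : MemLp F ∞ γm := memLp_top_of_bound hFmeas.aestronglyMeasurable Fbar hFC
  have hlip : LipschitzWith μbar.toNNReal fun e : EuclideanSpace ℝ (Fin d) =>
      ∫ s in (0 : ℝ)..‖e‖, μf s :=
    lipschitzWith_primitive_comp_norm hμcont
      fun s hs => abs_le.2 ⟨by linarith [hμ s hs], (hμ s hs).2⟩
  have key := relaxed_monotone_of_convexOn_add (dμ • weightedInner hFtop)
    (fun u w => by simp only [smul_apply, weightedInner_comm])
    (fun v => mul_nonneg hdμ.le (weightedInner_self_nonneg hFtop (hF.mono fun x hx => hx.1) v))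
    (continuous_integral_mul_comp_of_lipschitzWith hFmeas.aestronglyMeasurable hFC hlip)
    (convexOn_integral_primitive_add_weightedInner hμcont hdμ.le (fun s hs => (hμ s hs).1) hmono
      hlip (hF.mono fun x hx => hx.1) hFtop) hη₁ hη₂
  have hbound := weightedInner_self_le hFtop (hF.mono fun x hx => hx.2) (v₁ - v₂)
  rw [smul_apply, smul_apply, smul_eq_mul] at key
  nlinarith [mul_le_mul_of_nonneg_left hbound hdμ.le]
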